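/- arXiv:0704.2885 — 5 statements merged into one kernel-verified Lean document; each statement's English description precedes it below -/
import Mathlib

section
/- For vectors X, Y in ℝ^n: X ≺ Y if and only if F(X) ≤ F(Y) for every convex symmetric function F : ℝ^n → ℝ. -/
/-- `X` is majorized by `Y`: equal total sums and, for the nondecreasing
rearrangements, the tail sums (sums of largest coordinates) of `X` are
dominated by those of `Y`. -/
def IsMajorizedBy {n : ℕ} (X Y : Fin n → ℝ) : Prop :=
  (∑ i, X i = ∑ i, Y i) ∧
  ∀ k : Fin n, ∑ i ∈ Finset.Ici k, X (Tuple.sort X i) ≤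
    ∑ i ∈ Finset.Ici k, Y (Tuple.sort Y i)

/-!
If `X ≺ Y`, then for every weight vector `c` the rearrangement inequality and Abel summation
against the tail-sum inequalities give `∑ cᵢ Xᵢ ≤ ∑ cᵢ Y_{σ i}` for a suitable permutation `σ`.
By Hahn–Banach separation, `X` therefore lies in the convex hull of the permutations of `Y`,
and Jensen's inequality together with symmetry gives `F X ≤ F Y`. Conversely, the symmetric
convex functions `±∑ zᵢ` and `∑ (zᵢ - t)⁺`, with `t` the `k`-th smallest coordinate of `Y`,
recover the equality of the sums and the `k`-th tail inequality.
-/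

open Finset

theorem sum_mul_le_sum_mul_of_tail_le {n : ℕ} {a x y : Fin n → ℝ} (ha : Monotone a)
    (ha₀ : ∀ i, 0 ≤ a i) (htail : ∀ k, ∑ i ∈ Ici k, x i ≤ ∑ i ∈ Ici k, y i) :
    ∑ i, a i * x i ≤ ∑ i, a i * y i := by
  induction n with
  | zero => simp
  | succ n ih =>
    -- peeling off `a 0 * ∑ z` leaves the weights `a j.succ - a 0`, again monotone and nonnegative
    have hsplit : ∀ z : Fin (n + 1) → ℝ,
        ∑ i, a i * z i = a 0 * ∑ i, z i + ∑ j : Fin n, (a j.succ - a 0) * z j.succ := by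
      intro z
      simp only [Fin.sum_univ_succ, sub_mul, sum_sub_distrib, mul_add, mul_sum]
      ring
    have hrest : ∑ j : Fin n, (a j.succ - a 0) * x j.succ ≤
        ∑ j : Fin n, (a j.succ - a 0) * y j.succ :=
      ih (fun i j hij => by simpa using ha (Fin.succ_le_succ_iff.2 hij))
        (fun j => sub_nonneg.2 (ha (Fin.zero_le _)))
        (fun k => by simpa only [Fin.sum_Ici_succ] using htail k.succ)
    have htotal : ∑ i, x i ≤ ∑ i, y i := by
      simpa only [show Ici (0 : Fin (n + 1)) = univ from Ici_bot] using htail 0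
    rw [hsplit x, hsplit y]
    exact add_le_add (mul_le_mul_of_nonneg_left htotal (ha₀ 0)) hrest

theorem sum_mul_le_sum_mul_of_sum_eq_of_tail_le {n : ℕ} {a x y : Fin n → ℝ} (ha : Monotone a)
    (hsum : ∑ i, x i = ∑ i, y i) (htail : ∀ k, ∑ i ∈ Ici k, x i ≤ ∑ i ∈ Ici k, y i) :
    ∑ i, a i * x i ≤ ∑ i, a i * y i := by
  cases n with
  | zero => simp
  | succ n =>
    have hshift := sum_mul_le_sum_mul_of_tail_le (a := fun i => a i - a 0)
      (fun i j hij => by simpa using ha hij) (fun i => sub_nonneg.2 (ha (Fin.zero_le _))) htail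
    simp only [sub_mul, sum_sub_distrib, ← mul_sum, hsum] at hshift
    linarith

theorem sum_mul_le_sum_mul_sort {n : ℕ} (c x : Fin n → ℝ) :
    ∑ i, c i * x i ≤ ∑ i, c (Tuple.sort c i) * x (Tuple.sort x i) := by
  have h := ((Tuple.monotone_sort c).monovary (Tuple.monotone_sort x)
    ).sum_smul_comp_perm_le_sum_smul (σ := (Tuple.sort c).trans (Tuple.sort x)⁻¹)
  rw [← Equiv.sum_comp (Tuple.sort c)]
  simpa using h

theorem IsMajorizedBy.exists_perm_sum_mul_le {n : ℕ} {X Y : Fin n → ℝ} (h : IsMajorizedBy X Y)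
    (c : Fin n → ℝ) : ∃ σ : Equiv.Perm (Fin n), ∑ i, c i * X i ≤ ∑ i, c i * Y (σ i) := by
  refine ⟨(Tuple.sort c)⁻¹.trans (Tuple.sort Y), ?_⟩
  calc ∑ i, c i * X i ≤ ∑ i, c (Tuple.sort c i) * X (Tuple.sort X i) :=
        sum_mul_le_sum_mul_sort c X
    _ ≤ ∑ i, c (Tuple.sort c i) * Y (Tuple.sort Y i) :=
      sum_mul_le_sum_mul_of_sum_eq_of_tail_le (Tuple.monotone_sort c)
        (by simpa only [Equiv.sum_comp] using h.1) h.2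
    _ = ∑ i, c i * Y ((Tuple.sort c)⁻¹.trans (Tuple.sort Y) i) := by
      symm
      rw [← Equiv.sum_comp (Tuple.sort c)]
      simp

theorem mem_convexHull_of_forall_exists_le {E : Type*} [NormedAddCommGroup E] [NormedSpace ℝ E]
    {s : Set E} (hs : s.Finite) {x : E} (h : ∀ f : StrongDual ℝ E, ∃ y ∈ s, f x ≤ f y) :
    x ∈ convexHull ℝ s := by
  by_contra hx
  obtain ⟨f, u, hfs, hfx⟩ := geometric_hahn_banach_closed_point (convex_convexHull ℝ s)
    (hs.isCompact_convexHull (𝕜 := ℝ)).isClosed hx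
  obtain ⟨y, hy, hxy⟩ := h f
  linarith [hfs y (subset_convexHull ℝ s hy)]

theorem IsMajorizedBy.mem_convexHull_perm {n : ℕ} {X Y : Fin n → ℝ} (h : IsMajorizedBy X Y) :
    X ∈ convexHull ℝ (Set.range fun σ : Equiv.Perm (Fin n) => Y ∘ σ) := by
  refine mem_convexHull_of_forall_exists_le (Set.finite_range _) fun f => ?_
  have hf (z : Fin n → ℝ) : f z = ∑ i, f (fun j => if i = j then 1 else 0) * z i := by
    simpa [mul_comm] using f.toLinearMap.pi_apply_eq_sum_univ z
  obtain ⟨σ, hσ⟩ := h.exists_perm_sum_mul_le fun i => f (fun j => if i = j then 1 else 0)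
  exact ⟨Y ∘ σ, ⟨σ, rfl⟩, by rwa [hf, hf]⟩

theorem IsMajorizedBy.le_of_convexOn {n : ℕ} {X Y : Fin n → ℝ} (h : IsMajorizedBy X Y)
    {F : (Fin n → ℝ) → ℝ} (hF : ConvexOn ℝ Set.univ F)
    (hsymm : ∀ (γ : Equiv.Perm (Fin n)) (x : Fin n → ℝ), F (x ∘ γ) = F x) : F X ≤ F Y := by
  obtain ⟨_, ⟨σ, rfl⟩, hle⟩ := hF.exists_ge_of_mem_convexHull (Set.subset_univ _)
    h.mem_convexHull_perm
  rwa [hsymm] at hle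

theorem convexOn_univ_sum {ι E : Type*} [AddCommGroup E] [Module ℝ E] (t : Finset ι)
    {f : ι → E → ℝ} (hf : ∀ i ∈ t, ConvexOn ℝ Set.univ (f i)) :
    ConvexOn ℝ Set.univ (fun x => ∑ i ∈ t, f i x) := by
  rw [← Finset.sum_fn]
  exact Finset.sum_induction f (ConvexOn ℝ Set.univ) (fun _ _ => ConvexOn.add)
      (convexOn_const 0 convex_univ) hf

theorem convexOn_sum_max_sub {ι : Type*} [Fintype ι] (t : ℝ) :
    ConvexOn ℝ Set.univ fun z : ι → ℝ => ∑ i, max (z i - t) 0 :=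
  convexOn_univ_sum _ fun i _ =>
    ((LinearMap.proj (R := ℝ) (φ := fun _ : ι => ℝ) i).convexOn convex_univ |>.sub
      (concaveOn_const t convex_univ)).sup (convexOn_const 0 convex_univ)

theorem sum_Ici_sort_sub_le_sum_max {n : ℕ} (x : Fin n → ℝ) (k : Fin n) (t : ℝ) :
    ∑ i ∈ Ici k, (x (Tuple.sort x i) - t) ≤ ∑ i, max (x i - t) 0 := by
  rw [← Equiv.sum_comp (Tuple.sort x)]
  calc ∑ i ∈ Ici k, (x (Tuple.sort x i) - t) ≤ ∑ i ∈ Ici k, max (x (Tuple.sort x i) - t) 0 :=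
        sum_le_sum fun i _ => le_max_left _ _
    _ ≤ ∑ i, max (x (Tuple.sort x i) - t) 0 :=
        sum_le_sum_of_subset_of_nonneg (subset_univ _) fun i _ _ => le_max_right _ _

theorem sum_Ici_sort_sub_eq_sum_max {n : ℕ} (x : Fin n → ℝ) (k : Fin n) :
    ∑ i ∈ Ici k, (x (Tuple.sort x i) - x (Tuple.sort x k)) =
      ∑ i, max (x i - x (Tuple.sort x k)) 0 := by
  rw [← Equiv.sum_comp (Tuple.sort x), ← sum_subset (subset_univ (Ici k))]
  · refine sum_congr rfl fun i hi => (max_eq_left ?_).symm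
    exact sub_nonneg.2 (Tuple.monotone_sort x (mem_Ici.1 hi))
  · intro i _ hi
    exact max_eq_right (sub_nonpos.2 (Tuple.monotone_sort x (not_le.1 (mt mem_Ici.2 hi)).le))

theorem isMajorizedBy_of_forall_convexOn {n : ℕ} {X Y : Fin n → ℝ}
    (h : ∀ F : (Fin n → ℝ) → ℝ, ConvexOn ℝ Set.univ F →
      (∀ (γ : Equiv.Perm (Fin n)) (x : Fin n → ℝ), F (x ∘ γ) = F x) → F X ≤ F Y) :
    IsMajorizedBy X Y := by
  refine ⟨le_antisymm ?_ ?_, fun k => ?_⟩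
  · exact h (fun z => ∑ i, z i)
      (convexOn_univ_sum _ fun i _ => (LinearMap.proj i).convexOn convex_univ)
      fun γ x => Equiv.sum_comp γ x
  · simpa using h (fun z => ∑ i, -z i)
      (convexOn_univ_sum _ fun i _ => (-LinearMap.proj i).convexOn convex_univ)
      fun γ x => Equiv.sum_comp γ (-x)
  · have hF := h _ (convexOn_sum_max_sub (Y (Tuple.sort Y k))) fun γ x =>
      Equiv.sum_comp γ fun i => max (x i - Y (Tuple.sort Y k)) 0
    have hsub := (sum_Ici_sort_sub_le_sum_max X k _).trans
      (hF.trans (sum_Ici_sort_sub_eq_sum_max Y k).ge)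
    simpa only [sum_sub_distrib, sub_le_sub_iff_right] using hsub

theorem majorize_iff_convex_symmetric {n : ℕ} (X Y : Fin n → ℝ) :
    IsMajorizedBy X Y ↔
      ∀ F : (Fin n → ℝ) → ℝ, ConvexOn ℝ Set.univ F →
        (∀ (γ : Equiv.Perm (Fin n)) (x : Fin n → ℝ), F (x ∘ γ) = F x) →
        F X ≤ F Y :=
  ⟨fun h _ hF hsymm => h.le_of_convexOn hF hsymm, isMajorizedBy_of_forall_convexOn⟩
end

section
/- Let Z ∈ ℝ^n be nondecreasing (fully ordered), let X ∈ ℝ^n, and let γ be a transposition of indices i < j with X_i > X_j (a reordering permutation of X). Then X_γ − Z ≺ X − Z, i.e., the vector (X_{γ(1)} − Z_1, ..., X_{γ(n)} − Z_n) is majorized by (X_1 − Z_1, ..., X_n − Z_n). -/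
lemma subset_sum_le_top_sum {n : ℕ} (V : Fin n → ℝ) (k : Fin n)
    (s : Finset (Fin n)) (hs : s.card = (Finset.Ici k).card) :
    ∑ x ∈ s, V x ≤ ∑ x ∈ Finset.Ici k, V (Tuple.sort V x) := by
  set σ := Tuple.sort V
  set T : Finset (Fin n) := (Finset.Ici k).map σ.toEmbedding with hT
  have hsum : ∑ x ∈ Finset.Ici k, V (σ x) = ∑ x ∈ T, V x := by
    rw [hT, Finset.sum_map]; rfl
  rw [hsum]
  have hcard : s.card = T.card := by rw [hT, Finset.card_map]; exact hs
  have hmem : ∀ x, x ∈ T ↔ k ≤ σ.symm x := by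
    intro x
    rw [hT, Finset.mem_map_equiv, Finset.mem_Ici]
  have key : ∀ x, V x = (V ∘ σ) (σ.symm x) := by intro x; simp
  have hmono := Tuple.monotone_sort V
  -- elements of s \ T are ≤ V (σ k); elements of T \ s are ≥ V (σ k)
  have h1 : ∀ x ∈ s \ T, V x ≤ V (σ k) := by
    intro x hx
    rw [Finset.mem_sdiff, hmem] at hx
    have : σ.symm x ≤ k := le_of_not_ge hx.2
    calc V x = (V ∘ σ) (σ.symm x) := key x
    _ ≤ (V ∘ σ) k := hmono this
  have h2 : ∀ x ∈ T \ s, V (σ k) ≤ V x := by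
    intro x hx
    rw [Finset.mem_sdiff, hmem] at hx
    calc (V ∘ σ) k ≤ (V ∘ σ) (σ.symm x) := hmono hx.1
    _ = V x := (key x).symm
  have hcard' : (s \ T).card = (T \ s).card := Finset.card_sdiff_comm hcard
  have hst : ∑ x ∈ s \ T, V x ≤ ∑ x ∈ T \ s, V x := by
    calc ∑ x ∈ s \ T, V x ≤ (s \ T).card • V (σ k) :=
          Finset.sum_le_card_nsmul _ _ _ h1
    _ = (T \ s).card • V (σ k) := by rw [hcard']
    _ ≤ ∑ x ∈ T \ s, V x := Finset.card_nsmul_le_sum _ _ _ h2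
  rw [← Finset.sum_inter_add_sum_sdiff s T V, ← Finset.sum_inter_add_sum_sdiff T s V,
    Finset.inter_comm]
  linarith

theorem swap_sub_majorized {n : ℕ} (Z X : Fin n → ℝ) (hZ : Monotone Z)
    (i j : Fin n) (hij : i < j) (hX : X j < X i) :
    IsMajorizedBy (fun k => X (Equiv.swap i j k) - Z k) (fun k => X k - Z k) := by
  set A : Fin n → ℝ := fun k => X (Equiv.swap i j k) - Z k with hA
  set B : Fin n → ℝ := fun k => X k - Z k with hB
  constructor
  · have : ∑ x, X (Equiv.swap i j x) = ∑ x, X x := Equiv.sum_comp _ X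
    simp only [hA, hB, Finset.sum_sub_distrib, this]
  · intro k
    set σ := Tuple.sort A
    set sA : Finset (Fin n) := (Finset.Ici k).map σ.toEmbedding with hsA
    have hcardA : sA.card = (Finset.Ici k).card := Finset.card_map _
    have hsumA : ∑ x ∈ Finset.Ici k, A (σ x) = ∑ x ∈ sA, A x := by
      rw [hsA, Finset.sum_map]; rfl
    have hZij : Z i ≤ Z j := hZ hij.le
    have hAB : ∀ x, x ≠ i → x ≠ j → A x = B x := by
      intro x hxi hxj
      simp [hA, hB, Equiv.swap_apply_of_ne_of_ne hxi hxj]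
    -- construct t
    by_cases hji : j ∈ sA ∧ i ∉ sA
    · -- t = insert i (sA.erase j)
      set t := insert i (sA.erase j) with ht
      have hint : i ∉ sA.erase j := fun h => hji.2 (Finset.mem_of_mem_erase h)
      have hcardt : t.card = (Finset.Ici k).card := by
        rw [ht, Finset.card_insert_of_notMem hint,
          Finset.card_erase_of_mem hji.1, hcardA]
        have : 0 < (Finset.Ici k).card := Finset.card_pos.2 ⟨k, Finset.mem_Ici.2 le_rfl⟩
        omega
      have hstep : ∑ x ∈ sA, A x ≤ ∑ x ∈ t, B x := by
        rw [← Finset.sum_erase_add sA A hji.1, ht,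
          Finset.sum_insert hint]
        have hrest : ∑ x ∈ sA.erase j, A x = ∑ x ∈ sA.erase j, B x := by
          apply Finset.sum_congr rfl
          intro x hx
          have hxj : x ≠ j := Finset.ne_of_mem_erase hx
          have hxi : x ≠ i := fun h => hji.2 (h ▸ Finset.mem_of_mem_erase hx)
          exact hAB x hxi hxj
        have hAj : A j ≤ B i := by
          simp only [hA, hB, Equiv.swap_apply_right]
          linarith
        linarith
      calc ∑ x ∈ Finset.Ici k, A (σ x) = ∑ x ∈ sA, A x := hsumA
      _ ≤ ∑ x ∈ t, B x := hstep
      _ ≤ ∑ x ∈ Finset.Ici k, B (Tuple.sort B x) := subset_sum_le_top_sum B k t hcardt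
    · have hstep : ∑ x ∈ sA, A x ≤ ∑ x ∈ sA, B x := by
        push_neg at hji
        by_cases hj : j ∈ sA
        · have hi : i ∈ sA := hji hj
          rw [← Finset.sum_erase_add sA A hj, ← Finset.sum_erase_add sA B hj,
            ← Finset.sum_erase_add _ A (Finset.mem_erase.2 ⟨hij.ne, hi⟩),
            ← Finset.sum_erase_add _ B (Finset.mem_erase.2 ⟨hij.ne, hi⟩)]
          have hrest : ∑ x ∈ (sA.erase j).erase i, A x = ∑ x ∈ (sA.erase j).erase i, B x := by
            apply Finset.sum_congr rfl
            intro x hx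
            exact hAB x (Finset.ne_of_mem_erase hx)
              (Finset.ne_of_mem_erase (Finset.mem_of_mem_erase hx))
          have : A i + A j = B i + B j := by
            simp [hA, hB, Equiv.swap_apply_left, Equiv.swap_apply_right]; ring
          linarith
        · apply Finset.sum_le_sum
          intro x hx
          by_cases hxi : x = i
          · subst hxi
            simp only [hA, hB, Equiv.swap_apply_left]
            linarith
          · have hxj : x ≠ j := fun h => hj (h ▸ hx)
            exact (hAB x hxi hxj).le
      calc ∑ x ∈ Finset.Ici k, A (σ x) = ∑ x ∈ sA, A x := hsumA
      _ ≤ ∑ x ∈ sA, B x := hstep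
      _ ≤ ∑ x ∈ Finset.Ici k, B (Tuple.sort B x) := subset_sum_le_top_sum B k sA hcardA
end

section
/- Let Z ∈ ℝ^n be nondecreasing, let X ∈ ℝ^n, and let γ be a composition of reordering permutations (each a transposition swapping indices i < j of the current vector with strictly larger coordinate at position i). Then X_γ − Z ≺ X − Z. -/
/-- Sum over a subset of the right cardinality of a monotone function is at most
the tail sum. -/
lemma mono_sum_le_tail {n : ℕ} {f : Fin n → ℝ} (hf : Monotone f) (k : Fin n)
    (T : Finset (Fin n)) (hT : T.card = (Finset.Ici k).card) :
    ∑ i ∈ T, f i ≤ ∑ i ∈ Finset.Ici k, f i := by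
  have h1 : ∑ i ∈ T ∩ Finset.Ici k, f i + ∑ i ∈ T \ Finset.Ici k, f i = ∑ i ∈ T, f i :=
    Finset.sum_inter_add_sum_sdiff _ _ _
  have h2 : ∑ i ∈ Finset.Ici k ∩ T, f i + ∑ i ∈ Finset.Ici k \ T, f i
      = ∑ i ∈ Finset.Ici k, f i := Finset.sum_inter_add_sum_sdiff _ _ _
  rw [Finset.inter_comm] at h2
  have hc1 := Finset.card_sdiff_add_card_inter T (Finset.Ici k)
  have hc2 := Finset.card_sdiff_add_card_inter (Finset.Ici k) T
  rw [Finset.inter_comm] at hc2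
  have hcard : (T \ Finset.Ici k).card = (Finset.Ici k \ T).card := by omega
  have hle1 : ∑ i ∈ T \ Finset.Ici k, f i ≤ (T \ Finset.Ici k).card • f k := by
    apply Finset.sum_le_card_nsmul
    intro x hx
    simp only [Finset.mem_sdiff, Finset.mem_Ici, not_le] at hx
    exact hf hx.2.le
  have hle2 : (Finset.Ici k \ T).card • f k ≤ ∑ i ∈ Finset.Ici k \ T, f i := by
    apply Finset.card_nsmul_le_sum
    intro x hx
    simp only [Finset.mem_sdiff, Finset.mem_Ici] at hx
    exact hf hx.1
  rw [hcard] at hle1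
  linarith [hle1.trans hle2]

/-- Any subset sum of `A` with the right cardinality is at most the tail sum of
the sorted `A`. -/
lemma subset_sum_le_tail {n : ℕ} (A : Fin n → ℝ) (k : Fin n)
    (S : Finset (Fin n)) (hS : S.card = (Finset.Ici k).card) :
    ∑ i ∈ S, A i ≤ ∑ i ∈ Finset.Ici k, A (Tuple.sort A i) := by
  have hmono := Tuple.monotone_sort A
  have himg : ∑ i ∈ S.image (Tuple.sort A).symm, (A ∘ Tuple.sort A) i = ∑ i ∈ S, A i := by
    rw [Finset.sum_image (fun a _ b _ h => (Tuple.sort A).symm.injective h)]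
    simp [Function.comp]
  calc ∑ i ∈ S, A i = ∑ i ∈ S.image (Tuple.sort A).symm, (A ∘ Tuple.sort A) i := himg.symm
    _ ≤ ∑ i ∈ Finset.Ici k, (A ∘ Tuple.sort A) i := by
        apply mono_sum_le_tail hmono
        rw [Finset.card_image_of_injective _ (Tuple.sort A).symm.injective, hS]
    _ = ∑ i ∈ Finset.Ici k, A (Tuple.sort A i) := rfl

lemma IsMajorizedBy.trans {n : ℕ} {X Y W : Fin n → ℝ}
    (h1 : IsMajorizedBy X Y) (h2 : IsMajorizedBy Y W) : IsMajorizedBy X W :=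
  ⟨h1.1.trans h2.1, fun k => (h1.2 k).trans (h2.2 k)⟩

lemma tail_eq_image_sum {n : ℕ} (B : Fin n → ℝ) (k : Fin n) :
    ∑ i ∈ Finset.Ici k, B (Tuple.sort B i)
      = ∑ i ∈ (Finset.Ici k).image (Tuple.sort B), B i := by
  rw [Finset.sum_image (fun a _ b _ h => (Tuple.sort B).injective h)]

/-- A single reordering transposition (pinch) is majorized by the original. -/
lemma pinch_majorized {n : ℕ} (Z V : Fin n → ℝ) (hZ : Monotone Z) (i j : Fin n)
    (hij : i < j) (hV : V j < V i) :
    IsMajorizedBy (fun k => V (Equiv.swap i j k) - Z k) (fun k => V k - Z k) := by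
  set B : Fin n → ℝ := fun k => V (Equiv.swap i j k) - Z k with hB
  set A : Fin n → ℝ := fun k => V k - Z k with hA
  have hne : i ≠ j := ne_of_lt hij
  have hBi : B i = V j - Z i := by simp [hB, Equiv.swap_apply_left]
  have hBj : B j = V i - Z j := by simp [hB, Equiv.swap_apply_right]
  have hBm : ∀ m, m ≠ i → m ≠ j → B m = A m := by
    intro m h1 h2; simp [hB, hA, Equiv.swap_apply_of_ne_of_ne h1 h2]
  have hZij : Z i ≤ Z j := hZ hij.le
  have hBiAi : B i ≤ A i := by simp [hBi, hA]; linarith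
  have hBjAi : B j ≤ A i := by simp [hBj, hA]; linarith
  have hpair : B i + B j = A i + A j := by simp [hBi, hBj, hA]; ring
  constructor
  · have : ∑ k, V (Equiv.swap i j k) = ∑ k, V k := Equiv.sum_comp (Equiv.swap i j) V
    simp only [hB, hA, Finset.sum_sub_distrib]
    rw [this]
  · intro k
    set S : Finset (Fin n) := (Finset.Ici k).image (Tuple.sort B) with hSdef
    have hScard : S.card = (Finset.Ici k).card :=
      Finset.card_image_of_injective _ (Tuple.sort B).injective
    rw [tail_eq_image_sum B k, ← hSdef]
    by_cases hiS : i ∈ S <;> by_cases hjS : j ∈ S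
    · -- both in S : equal sums on S
      have hsum : ∑ m ∈ S, B m = ∑ m ∈ S, A m := by
        rw [← Finset.add_sum_erase S B hiS, ← Finset.add_sum_erase S A hiS,
            ← Finset.add_sum_erase _ B (Finset.mem_erase.mpr ⟨(Ne.symm hne), hjS⟩),
            ← Finset.add_sum_erase _ A (Finset.mem_erase.mpr ⟨(Ne.symm hne), hjS⟩)]
        have : ∑ m ∈ (S.erase i).erase j, B m = ∑ m ∈ (S.erase i).erase j, A m := by
          apply Finset.sum_congr rfl
          intro m hm
          simp only [Finset.mem_erase] at hm
          exact hBm m hm.2.1 hm.1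
        rw [this]; linarith
      rw [hsum]
      exact subset_sum_le_tail A k S hScard
    · -- i ∈ S, j ∉ S
      have hsum : ∑ m ∈ S, B m ≤ ∑ m ∈ S, A m := by
        rw [← Finset.add_sum_erase S B hiS, ← Finset.add_sum_erase S A hiS]
        have : ∑ m ∈ S.erase i, B m = ∑ m ∈ S.erase i, A m := by
          apply Finset.sum_congr rfl
          intro m hm
          simp only [Finset.mem_erase] at hm
          exact hBm m hm.1 (fun h => hjS (h ▸ hm.2))
        rw [this]; linarith
      exact hsum.trans (subset_sum_le_tail A k S hScard)
    · -- j ∈ S, i ∉ S : replace j by i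
      set S' : Finset (Fin n) := insert i (S.erase j) with hS'
      have hiSe : i ∉ S.erase j := fun h => hiS (Finset.mem_of_mem_erase h)
      have hS'card : S'.card = (Finset.Ici k).card := by
        rw [hS', Finset.card_insert_of_notMem hiSe, Finset.card_erase_of_mem hjS, hScard]
        have : 0 < (Finset.Ici k).card := Finset.card_pos.mpr ⟨k, Finset.mem_Ici.mpr le_rfl⟩
        omega
      have hsum : ∑ m ∈ S, B m ≤ ∑ m ∈ S', A m := by
        rw [← Finset.add_sum_erase S B hjS, hS', Finset.sum_insert hiSe]
        have : ∑ m ∈ S.erase j, B m = ∑ m ∈ S.erase j, A m := by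
          apply Finset.sum_congr rfl
          intro m hm
          simp only [Finset.mem_erase] at hm
          exact hBm m (fun h => hiS (h ▸ hm.2)) hm.1
        rw [this]; linarith
      exact hsum.trans (subset_sum_le_tail A k S' hS'card)
    · -- neither
      have hsum : ∑ m ∈ S, B m = ∑ m ∈ S, A m := by
        apply Finset.sum_congr rfl
        intro m hm
        exact hBm m (fun h => hiS (h ▸ hm)) (fun h => hjS (h ▸ hm))
      rw [hsum]
      exact subset_sum_le_tail A k S hScard

/-- `γ` is a composition of reordering permutations of `X`: each step transposes
indices `i < j` at which the current vector `X ∘ γ` has a strictly larger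
coordinate at position `i`. -/
inductive IsReorderChain {n : ℕ} (X : Fin n → ℝ) : Equiv.Perm (Fin n) → Prop
  | one : IsReorderChain X 1
  | step (γ : Equiv.Perm (Fin n)) (i j : Fin n) :
      IsReorderChain X γ → i < j → X (γ j) < X (γ i) →
      IsReorderChain X (γ * Equiv.swap i j)

theorem reorderChain_sub_majorized {n : ℕ} (Z X : Fin n → ℝ) (hZ : Monotone Z)
    (γ : Equiv.Perm (Fin n)) (hγ : IsReorderChain X γ) :
    IsMajorizedBy (fun k => X (γ k) - Z k) (fun k => X k - Z k) := by
  induction hγ with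
  | one => exact ⟨rfl, fun k => le_rfl⟩
  | step γ i j hchain hij hV ih =>
      have hpinch := pinch_majorized Z (fun k => X (γ k)) hZ i j hij hV
      have heq : (fun k => X ((γ * Equiv.swap i j) k) - Z k)
          = (fun k => X (γ (Equiv.swap i j k)) - Z k) := by
        funext k; rw [Equiv.Perm.mul_apply]
      rw [heq]
      exact hpinch.trans ih
end

section
/- If Z ∈ ℝ^n is nondecreasing, X ∈ ℝ^n, σ is any permutation, and g : ℝ → ℝ is convex, then ∑_{i=1}^n g(X_{α(i)} − Z_i) ≤ ∑_{i=1}^n g(X_{σ(i)} − Z_i), where α is the permutation sorting X into nondecreasing order. -/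
/-!
The matrix `f i i' = g (Y i' - Z i)` is a Monge array: for `i ≤ j` and `i' ≤ j'`, convexity of `g`
gives `f i i' + f j j' ≤ f i j' + f j i'`, because the two arguments on the left lie between those
on the right and have the same sum. On a Monge array the identity is an optimal assignment: if
`k` is the largest point moved by a permutation `τ`, then `τ k < k`, and exchanging the values of
`τ` at `k` and at `τ⁻¹ k` does not increase the assignment cost and fixes `k`.
-/

open Finset Equiv

theorem ConvexOn.add_le_add_of_le_of_le_of_add_eq {𝕜 β : Type*} [Field 𝕜] [LinearOrder 𝕜]
    [IsStrictOrderedRing 𝕜] [AddCommMonoid β] [PartialOrder β] [IsOrderedAddMonoid β]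
    [Module 𝕜 β] {S : Set 𝕜} {g : 𝕜 → β} (hg : ConvexOn 𝕜 S g) {a b s t : 𝕜}
    (ha : a ∈ S) (hb : b ∈ S) (has : a ≤ s) (hsb : s ≤ b) (hst : s + t = a + b) :
    g s + g t ≤ g a + g b := by
  obtain hab | hab := (has.trans hsb).eq_or_lt
  · obtain rfl : s = a := le_antisymm (hab ▸ hsb) has
    obtain rfl : t = b := by linarith
    rfl
  have hba : b - a ≠ 0 := sub_ne_zero.2 hab.ne'
  set θ := (b - s) / (b - a)
  set μ := (s - a) / (b - a)
  have hθ : 0 ≤ θ := div_nonneg (by linarith) (by linarith)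
  have hμ : 0 ≤ μ := div_nonneg (by linarith) (by linarith)
  have hθμ : θ + μ = 1 := by rw [← add_div, sub_add_sub_cancel, div_self hba]
  have hs : θ • a + μ • b = s := by simp only [θ, μ, smul_eq_mul]; field_simp; ring
  have ht : μ • a + θ • b = t := by
    rw [eq_sub_of_add_eq' hst]; simp only [θ, μ, smul_eq_mul]; field_simp; ring
  calc g s + g t ≤ (θ • g a + μ • g b) + (μ • g a + θ • g b) :=
        add_le_add (hs ▸ hg.2 ha hb hθ hμ hθμ) (ht ▸ hg.2 ha hb hμ hθ ((add_comm _ _).trans hθμ))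
    _ = g a + g b := by
        rw [add_add_add_comm, ← add_smul, ← add_smul, add_comm μ θ, hθμ, one_smul, one_smul]

theorem Equiv.Perm.sum_le_sum_comp_of_monge {ι M : Type*} [Fintype ι] [LinearOrder ι]
    [AddCommMonoid M] [PartialOrder M] [IsOrderedAddMonoid M] (f : ι → ι → M)
    (hf : ∀ ⦃i j i' j'⦄, i ≤ j → i' ≤ j' → f i i' + f j j' ≤ f i j' + f j i') (τ : Perm ι) :
    ∑ i, f i i ≤ ∑ i, f i (τ i) := by
  induction h : τ.support.card using Nat.strong_induction_on generalizing τ with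
  | _ m ih =>
    subst h
    obtain rfl | hne := eq_or_ne τ 1
    · rfl
    have hsupp : τ.support.Nonempty := nonempty_iff_ne_empty.2 (mt Perm.support_eq_empty_iff.1 hne)
    set k := τ.support.max' hsupp
    have hk : τ k ≠ k := Perm.mem_support.1 (τ.support.max'_mem hsupp)
    have hfix : ∀ x, k < x → τ x = x := fun x hx ↦
      Perm.notMem_support.1 fun hx' ↦ (τ.support.le_max' x hx').not_gt hx
    have hτk : τ k < k := (le_of_not_gt fun hlt ↦ hk (τ.injective (hfix _ hlt))).lt_of_ne hk
    set j := τ.symm k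
    have hτj : τ j = k := τ.apply_symm_apply k
    have hjk : j < k := lt_of_le_of_ne (le_of_not_gt fun hlt ↦ hlt.ne (hτj.symm.trans (hfix j hlt)))
      fun hjk ↦ hk (hjk ▸ hτj)
    set τ' := swap k (τ k) * τ
    have hτ'j : τ' j = τ k := by simp [τ', hτj]
    have hτ'k : τ' k = k := by simp [τ']
    have hτ'_of_ne : ∀ x ∉ ({j, k} : Finset ι), τ' x = τ x := by
      intro x hx
      simp only [mem_insert, mem_singleton, not_or] at hx
      exact swap_apply_of_ne_of_ne (fun h ↦ hx.1 (τ.injective (h.trans hτj.symm)))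
        (fun h ↦ hx.2 (τ.injective h))
    calc ∑ i, f i i ≤ ∑ i, f i (τ' i) := ih _ (Perm.card_support_swap_mul hk) τ' rfl
      _ = f j (τ k) + f k k + ∑ i ∈ {j, k}ᶜ, f i (τ' i) := by
          rw [← sum_add_sum_compl {j, k}, sum_pair hjk.ne, hτ'j, hτ'k]
      _ ≤ f j k + f k (τ k) + ∑ i ∈ {j, k}ᶜ, f i (τ i) := by
          refine add_le_add (hf hjk.le hτk.le) (le_of_eq (sum_congr rfl fun x hx ↦ ?_))
          rw [hτ'_of_ne x (mem_compl.1 hx)]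
      _ = ∑ i, f i (τ i) := by rw [← sum_add_sum_compl {j, k}, sum_pair hjk.ne, hτj]

theorem ConvexOn.sum_apply_sub_le_sum_apply_perm_sub {ι 𝕜 β : Type*} [Fintype ι] [LinearOrder ι]
    [Field 𝕜] [LinearOrder 𝕜] [IsStrictOrderedRing 𝕜] [AddCommMonoid β] [PartialOrder β]
    [IsOrderedAddMonoid β] [Module 𝕜 β] {g : 𝕜 → β} (hg : ConvexOn 𝕜 Set.univ g)
    {Y Z : ι → 𝕜} (hY : Monotone Y) (hZ : Monotone Z) (τ : Perm ι) :
    ∑ i, g (Y i - Z i) ≤ ∑ i, g (Y (τ i) - Z i) := by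
  refine Perm.sum_le_sum_comp_of_monge (fun i i' ↦ g (Y i' - Z i)) (fun i j i' j' hij hij' ↦ ?_) τ
  rw [add_comm (g (Y j' - Z i))]
  exact hg.add_le_add_of_le_of_le_of_add_eq trivial trivial (by linarith [hZ hij])
    (by linarith [hY hij']) (by ring)

theorem sum_convex_sorted_sub_le {n : ℕ} (Z X : Fin n → ℝ) (hZ : Monotone Z)
    (α : Equiv.Perm (Fin n)) (hα : Monotone (X ∘ α)) (σ : Equiv.Perm (Fin n))
    (g : ℝ → ℝ) (hg : ConvexOn ℝ Set.univ g) :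
    ∑ i, g (X (α i) - Z i) ≤ ∑ i, g (X (σ i) - Z i) := by
  simpa using hg.sum_apply_sub_le_sum_apply_perm_sub hα hZ (α⁻¹ * σ)
end

section
/- For nondecreasing Z ∈ ℝ^n, any X ∈ ℝ^n, and any permutation σ, ∑_{i=1}^n (X_{α(i)} − Z_i)⁻ ≤ ∑_{i=1}^n (X_{σ(i)} − Z_i)⁻, where α sorts X in nondecreasing order and x⁻ = max(−x, 0). -/
open Finset Equiv

theorem ConvexOn.map_add_sub_map_le_map_add_sub_map {𝕜 : Type*} [Field 𝕜] [LinearOrder 𝕜]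
    [IsStrictOrderedRing 𝕜] {s : Set 𝕜} {φ : 𝕜 → 𝕜} (hφ : ConvexOn 𝕜 s φ) {x y h : 𝕜}
    (hx : x ∈ s) (hyh : y + h ∈ s) (hxy : x ≤ y) (hh : 0 ≤ h) :
    φ (x + h) - φ x ≤ φ (y + h) - φ y := by
  rcases (add_nonneg (sub_nonneg.2 hxy) hh).eq_or_lt with hd | hd
  · obtain ⟨rfl, rfl⟩ : y = x ∧ h = 0 := by constructor <;> linarith
    rfl
  -- `x + h` and `y` are the convex combinations of `x` and `y + h` with swapped weights
  have hsum : (y - x) / (y - x + h) + h / (y - x + h) = 1 := by field_simp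
  have hxh := hφ.2 hx hyh (div_nonneg (sub_nonneg.2 hxy) hd.le) (div_nonneg hh hd.le) hsum
  have hy := hφ.2 hx hyh (div_nonneg hh hd.le) (div_nonneg (sub_nonneg.2 hxy) hd.le)
    ((add_comm _ _).trans hsum)
  simp only [smul_eq_mul] at hxh hy
  have e1 : (y - x) / (y - x + h) * x + h / (y - x + h) * (y + h) = x + h := by
    field_simp; ring
  have e2 : h / (y - x + h) * x + (y - x) / (y - x + h) * (y + h) = y := by
    field_simp; ring
  rw [e1] at hxh
  rw [e2] at hy
  linear_combination hxh + hy + (φ x + φ (y + h)) * hsum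

theorem Fintype.sum_apply_swap_add {ι M : Type*} [Fintype ι] [DecidableEq ι] [AddCommMonoid M]
    (g : ι → ι → M) {i j : ι} (hij : i ≠ j) :
    ∑ k, g k (swap i j k) + (g i i + g j j) = ∑ k, g k k + (g i j + g j i) := by
  have hrest : ∑ k ∈ univ \ {i, j}, g k (swap i j k) = ∑ k ∈ univ \ {i, j}, g k k :=
    Finset.sum_congr rfl fun k hk => by
      simp only [mem_sdiff, mem_insert, mem_singleton, not_or] at hk
      rw [swap_apply_of_ne_of_ne hk.2.1 hk.2.2]
  rw [← sum_sdiff (subset_univ {i, j}), ← sum_sdiff (subset_univ {i, j}) (f := fun k => g k k),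
    sum_pair hij, sum_pair hij, hrest, swap_apply_left, swap_apply_right]
  abel

theorem sum_mul_lt_sum_mul_comp_mul_swap {n : ℕ} (X : Fin n → ℝ) (τ : Perm (Fin n)) {i j : Fin n}
    (hij : i < j) (hX : X (τ j) < X (τ i)) :
    ∑ k : Fin n, (k : ℝ) * X (τ k) < ∑ k : Fin n, (k : ℝ) * X ((τ * swap i j) k) := by
  have hswap := Fintype.sum_apply_swap_add (fun k l : Fin n => (k : ℝ) * X (τ l)) hij.ne
  have hij' : (i : ℝ) < j := by exact_mod_cast hij
  simp only [Perm.coe_mul, Function.comp_apply]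
  nlinarith [mul_pos (sub_pos.2 hij') (sub_pos.2 hX)]

theorem exists_monotone_comp_perm_le {n : ℕ} {X : Fin n → ℝ} (c : Perm (Fin n) → ℝ)
    (hc : ∀ τ : Perm (Fin n), ∀ i j, i < j → X (τ j) < X (τ i) → c (τ * swap i j) ≤ c τ)
    (σ : Perm (Fin n)) : ∃ τ : Perm (Fin n), Monotone (X ∘ τ) ∧ c τ ≤ c σ := by
  -- among the permutations not costlier than `σ`, take one maximizing `∑ k, k * X (τ k)`;
  -- undoing an inversion would increase that weight
  obtain ⟨τ, hτ, hmax⟩ := exists_max_image (univ.filter fun τ : Perm (Fin n) => c τ ≤ c σ)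
    (fun τ : Perm (Fin n) => ∑ k : Fin n, (k : ℝ) * X (τ k)) ⟨σ, by simp⟩
  rw [mem_filter_univ] at hτ
  refine ⟨τ, monotone_iff_forall_lt.2 fun i j hij => not_lt.1 fun hX => ?_, hτ⟩
  have := hmax (τ * swap i j) ((mem_filter_univ _).2 ((hc τ i j hij hX).trans hτ))
  exact this.not_gt (sum_mul_lt_sum_mul_comp_mul_swap X τ hij hX)

theorem ConvexOn.sum_map_sub_comp_mul_swap_le {n : ℕ} {φ : ℝ → ℝ} (hφ : ConvexOn ℝ Set.univ φ)
    {Z X : Fin n → ℝ} (hZ : Monotone Z) (τ : Perm (Fin n)) {i j : Fin n} (hij : i < j)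
    (hX : X (τ j) < X (τ i)) :
    ∑ k, φ (X ((τ * swap i j) k) - Z k) ≤ ∑ k, φ (X (τ k) - Z k) := by
  have hswap := Fintype.sum_apply_swap_add (fun k l => φ (X (τ l) - Z k)) hij.ne
  have hexch := hφ.map_add_sub_map_le_map_add_sub_map (Set.mem_univ (X (τ j) - Z j))
    (Set.mem_univ (X (τ i) - Z j + (Z j - Z i))) (sub_le_sub_right hX.le _)
    (sub_nonneg.2 (hZ hij.le))
  simp only [sub_add_sub_cancel] at hexch
  simp only [Perm.coe_mul, Function.comp_apply]
  linarith

theorem ConvexOn.sum_map_sub_comp_perm_le {n : ℕ} {φ : ℝ → ℝ} (hφ : ConvexOn ℝ Set.univ φ)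
    {Z X : Fin n → ℝ} (hZ : Monotone Z) {α : Perm (Fin n)} (hα : Monotone (X ∘ α))
    (σ : Perm (Fin n)) : ∑ i, φ (X (α i) - Z i) ≤ ∑ i, φ (X (σ i) - Z i) := by
  obtain ⟨τ, hτ, hle⟩ := exists_monotone_comp_perm_le (fun τ => ∑ i, φ (X (τ i) - Z i))
    (fun τ _ _ hij hX => hφ.sum_map_sub_comp_mul_swap_le hZ τ hij hX) σ
  have hατ : ∀ i, X (α i) = X (τ i) := congrFun (Tuple.unique_monotone hα hτ)
  simpa only [hατ] using hle

theorem sum_negPart_sorted_sub_le {n : ℕ} (Z X : Fin n → ℝ) (hZ : Monotone Z)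
    (α : Equiv.Perm (Fin n)) (hα : Monotone (X ∘ α)) (σ : Equiv.Perm (Fin n)) :
    ∑ i, max (-(X (α i) - Z i)) 0 ≤ ∑ i, max (-(X (σ i) - Z i)) 0 :=
  ((concaveOn_id convex_univ).neg.sup (convexOn_const 0 convex_univ)).sum_map_sub_comp_perm_le
    hZ hα σ
end
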